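/- STV fooling set cardinality: for n = ℓ·m! and 1 ≤ k ≤ m, the number of profiles containing, for each STV-signature s, exactly ℓ·R̃(s) copies of a fixed representative of s, equals n! divided by ( ∏_{S ⊆ {k,...,m-1}} ( ℓ ∏_{c ∈ {1,...,m-1}\S} c )! )^k. -/

import Mathlib

open Finset

-- fibers cover: every point lies in some fiber
lemma fibers_cover {α β γ : Type*} [DecidableEq α] [Fintype γ]
    {B : Finset β} {v : β → α} (hv : Set.InjOn v B) {c : β → ℕ}
    (hcard : Fintype.card γ = ∑ b ∈ B, c b) {P : γ → α}
    (hP : ∀ b ∈ B, (univ.filter (fun i => P i = v b)).card = c b) (i : γ) :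
    ∃ b ∈ B, P i = v b := by
  classical
  have hU : (B.biUnion fun b => univ.filter (fun i => P i = v b)) = univ := by
    apply Finset.eq_univ_of_card
    rw [Finset.card_biUnion]
    · rw [Finset.sum_congr rfl hP, ← hcard]
    · intro b hb b' hb' hne
      simp only [Finset.disjoint_left, mem_filter]
      rintro x ⟨-, hx⟩ ⟨-, hx'⟩
      exact hne (hv hb hb' (hx ▸ hx'))
  have : i ∈ B.biUnion fun b => univ.filter (fun i => P i = v b) := by
    rw [hU]; exact mem_univ i
  simpa using this

lemma nat_card_sigma {ι : Type*} [Fintype ι] (F : ι → Type*) [∀ i, Finite (F i)] :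
    Nat.card (Σ i, F i) = ∑ i, Nat.card (F i) := by
  letI : ∀ i, Fintype (F i) := fun i => Fintype.ofFinite _
  simp [Nat.card_eq_fintype_card]

lemma filter_subtype_card {γ α : Type*} [Fintype γ] [DecidableEq γ] [DecidableEq α]
    (T : Finset γ) (P : γ → α) (a : α) (h : ∀ j, P j = a → j ∉ T) :
    (univ.filter (fun i : {i : γ // i ∉ T} => P i.1 = a)).card
      = (univ.filter (fun i : γ => P i = a)).card := by
  rw [← Finset.card_image_of_injective
      (univ.filter (fun i : {i : γ // i ∉ T} => P i.1 = a)) Subtype.val_injective]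
  congr 1
  ext j
  simp only [Finset.mem_image, mem_filter, mem_univ, true_and, Subtype.exists]
  constructor
  · rintro ⟨x, hx, hπ, rfl⟩; exact hπ
  · intro hj; exact ⟨j, h j hj, hj, rfl⟩

lemma count_multinomial {α β : Type*} [DecidableEq α] (c : β → ℕ) (v : β → α) (B : Finset β) :
    ∀ (γ : Type) [Fintype γ] [DecidableEq γ], Set.InjOn v B →
      Fintype.card γ = ∑ b ∈ B, c b →
      Nat.card {P : γ → α // ∀ b ∈ B, (univ.filter (fun i => P i = v b)).card = c b}
        = Nat.multinomial B c := by
  induction B using Finset.cons_induction with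
  | empty =>
    intro γ _ _ _ hγ
    haveI : IsEmpty γ := Fintype.card_eq_zero_iff.mp (by simpa using hγ)
    rw [Nat.card_congr (Equiv.subtypeUnivEquiv (fun P => by simp))]
    simp [Nat.card_unique]
  | cons b B' hb ih =>
    intro γ _ _ hv hγ
    classical
    have hbB : b ∈ Finset.cons b B' hb := mem_cons_self b B'
    have hB'sub : ∀ b' ∈ B', b' ∈ Finset.cons b B' hb := fun b' h => mem_cons_of_mem h
    have hv' : Set.InjOn v B' :=
      hv.mono (Finset.coe_subset.mpr (Finset.subset_cons hb))
    have hvb : ∀ b' ∈ B', v b' ≠ v b := by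
      intro b' h hc
      exact hb ((hv (hB'sub b' h) hbB hc) ▸ h)
    have hsum : Fintype.card γ = c b + ∑ b' ∈ B', c b' := by rwa [Finset.sum_cons] at hγ
    set Cond : (γ → α) → Prop :=
      fun P => ∀ b'' ∈ Finset.cons b B' hb, (univ.filter (fun i => P i = v b'')).card = c b''
      with hCond
    set f : {P : γ → α // Cond P} → {T : Finset γ // T.card = c b} :=
      fun P => ⟨univ.filter (fun i => P.1 i = v b), P.2 b hbB⟩ with hf
    have hcsub : ∀ T : {T : Finset γ // T.card = c b},
        Fintype.card {i : γ // i ∉ T.1} = ∑ b' ∈ B', c b' := by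
      intro T
      have h1 : Fintype.card {i : γ // i ∈ T.1} = c b := by
        rw [Fintype.card_coe]; exact T.2
      have h2 := Fintype.card_subtype_compl (fun i : γ => i ∈ T.1)
      rw [h2, h1]
      omega
    -- the equivalence for a fixed T
    have e2 : ∀ T : {T : Finset γ // T.card = c b},
        {x : {P : γ → α // Cond P} // f x = T} ≃
        {Q : {i : γ // i ∉ T.1} → α //
          ∀ b' ∈ B', (univ.filter (fun i => Q i = v b')).card = c b'} := by
      intro T
      refine ⟨fun x => ⟨fun i => x.1.1 i.1, ?_⟩, fun Q => ⟨⟨fun i =>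
        if h : i ∈ T.1 then v b else Q.1 ⟨i, h⟩, ?_⟩, ?_⟩, ?_, ?_⟩
      · -- forward condition
        intro b' hb'
        have hfib : univ.filter (fun i => x.1.1 i = v b) = T.1 := congrArg Subtype.val x.2
        rw [filter_subtype_card T.1 x.1.1 (v b')]
        · exact x.1.2 b' (hB'sub b' hb')
        · intro j hj
          rw [← hfib]
          simp only [mem_filter, mem_univ, true_and, hj]
          exact hvb b' hb'
      · -- backward condition
        have hQcover : ∀ i : {i : γ // i ∉ T.1}, ∃ b' ∈ B', Q.1 i = v b' :=
          fibers_cover hv' (hcsub T) Q.2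
        have hfib0 : univ.filter (fun i =>
            (if h : i ∈ T.1 then v b else Q.1 ⟨i, h⟩) = v b) = T.1 := by
          ext i
          simp only [mem_filter, mem_univ, true_and]
          by_cases h : i ∈ T.1
          · simp [h]
          · simp only [h, dif_neg, not_false_iff, iff_false]
            obtain ⟨b', hb', hQ⟩ := hQcover ⟨i, h⟩
            rw [hQ]
            exact hvb b' hb'
        intro b'' hb''
        rcases Finset.mem_cons.mp hb'' with rfl | hb''
        · rw [hfib0]; exact T.2
        · have hnotT : ∀ j : γ, (if h : j ∈ T.1 then v b else Q.1 ⟨j, h⟩) = v b'' → j ∉ T.1 := by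
            intro j hj hjT
            rw [dif_pos hjT] at hj
            exact hvb b'' hb'' hj.symm
          rw [← filter_subtype_card T.1 _ (v b'') hnotT]
          have : (univ.filter (fun i : {i : γ // i ∉ T.1} =>
              (if h : i.1 ∈ T.1 then v b else Q.1 ⟨i.1, h⟩) = v b'')) =
              (univ.filter (fun i : {i : γ // i ∉ T.1} => Q.1 i = v b'')) := by
            apply Finset.filter_congr
            intro i _
            rw [dif_neg i.2]
          rw [this]
          exact Q.2 b'' hb''
      · -- f value is T
        apply Subtype.ext
        show univ.filter _ = T.1
        ext i
        simp only [mem_filter, mem_univ, true_and]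
        by_cases h : i ∈ T.1
        · simp [h]
        · simp only [h, dif_neg, not_false_iff, iff_false]
          have hQcover : ∀ i : {i : γ // i ∉ T.1}, ∃ b' ∈ B', Q.1 i = v b' :=
            fibers_cover hv' (hcsub T) Q.2
          obtain ⟨b', hb', hQ⟩ := hQcover ⟨i, h⟩
          rw [hQ]
          exact hvb b' hb'
      · -- left inverse
        intro x
        apply Subtype.ext
        apply Subtype.ext
        funext i
        show (if h : i ∈ T.1 then v b else x.1.1 i) = x.1.1 i
        by_cases h : i ∈ T.1
        · rw [dif_pos h]
          have hfib : univ.filter (fun i => x.1.1 i = v b) = T.1 := congrArg Subtype.val x.2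
          rw [← hfib] at h
          exact (Finset.mem_filter.mp h).2.symm
        · rw [dif_neg h]
      · -- right inverse
        intro Q
        apply Subtype.ext
        funext i
        show (if h : i.1 ∈ T.1 then v b else Q.1 ⟨i.1, h⟩) = Q.1 i
        rw [dif_neg i.2]
    have hfin : ∀ T : {T : Finset γ // T.card = c b},
        Finite {x : {P : γ → α // Cond P} // f x = T} := by
      intro T
      have hc : Nat.card {x : {P : γ → α // Cond P} // f x = T} = Nat.multinomial B' c := by
        rw [Nat.card_congr (e2 T)]
        exact ih {i : γ // i ∉ T.1} hv' (hcsub T)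
      have hpos : 0 < Nat.card {x : {P : γ → α // Cond P} // f x = T} := by
        rw [hc]; exact Nat.multinomial_pos _ _
      exact (Nat.card_pos_iff.mp hpos).2
    calc Nat.card {P : γ → α // Cond P}
        = Nat.card (Σ T : {T : Finset γ // T.card = c b}, {x // f x = T}) :=
          Nat.card_congr (Equiv.sigmaFiberEquiv f).symm
      _ = ∑ T : {T : Finset γ // T.card = c b}, Nat.card {x // f x = T} :=
          nat_card_sigma _
      _ = ∑ _T : {T : Finset γ // T.card = c b}, Nat.multinomial B' c := by
          apply Finset.sum_congr rfl
          intro T _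
          rw [Nat.card_congr (e2 T)]
          exact ih {i : γ // i ∉ T.1} hv' (hcsub T)
      _ = Fintype.card {T : Finset γ // T.card = c b} * Nat.multinomial B' c := by
          rw [Finset.sum_const, Finset.card_univ, smul_eq_mul]
      _ = Nat.multinomial (Finset.cons b B' hb) c := by
          rw [Nat.multinomial_cons]
          congr 1
          have hps : (univ.filter (fun T : Finset γ => T.card = c b))
              = Finset.powersetCard (c b) univ := by
            rw [Finset.powersetCard_eq_filter, Finset.powerset_univ]
          rw [Fintype.card_subtype, hps, Finset.card_powersetCard, Finset.card_univ, hsum]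

lemma aux_fact (k : ℕ) (hk : 1 ≤ k) :
    ∀ m, k ≤ m → Nat.factorial k * ∏ c ∈ Finset.Icc k (m-1), (1 + c) = Nat.factorial m := by
  intro m hm
  induction m, hm using Nat.le_induction with
  | base =>
    rw [Finset.Icc_eq_empty (by omega), Finset.prod_empty, mul_one]
  | succ m hm ih =>
    have h1 : m + 1 - 1 = (m - 1) + 1 := by omega
    rw [h1, Finset.prod_Icc_succ_top (by omega), ← mul_assoc, ih]
    have h2 : 1 + (m - 1 + 1) = m + 1 := by omega
    rw [h2, Nat.factorial_succ, mul_comm]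

lemma key_sum (m k : ℕ) (hk : 1 ≤ k) (hkm : k ≤ m) :
    k * ∑ S ∈ (Finset.Icc k (m-1)).powerset, ∏ c ∈ Finset.Icc 1 (m-1) \ S, c
      = Nat.factorial m := by
  have hsplit : ∀ S ∈ (Finset.Icc k (m-1)).powerset,
      ∏ c ∈ Finset.Icc 1 (m-1) \ S, c
        = Nat.factorial (k-1) * ∏ c ∈ Finset.Icc k (m-1) \ S, c := by
    intro S hS
    have hSmem : ∀ x ∈ S, k ≤ x := by
      intro x hx
      have := Finset.mem_powerset.mp hS hx
      exact (Finset.mem_Icc.mp this).1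
    have hun : Finset.Icc 1 (m-1) \ S
        = Finset.Icc 1 (k-1) ∪ (Finset.Icc k (m-1) \ S) := by
      ext x
      simp only [Finset.mem_sdiff, Finset.mem_Icc, Finset.mem_union]
      constructor
      · rintro ⟨⟨h1, h2⟩, hxS⟩
        by_cases hxk : x ≤ k - 1
        · exact Or.inl ⟨h1, hxk⟩
        · exact Or.inr ⟨⟨by omega, h2⟩, hxS⟩
      · rintro (⟨h1, h2⟩ | ⟨⟨h1, h2⟩, hxS⟩)
        · exact ⟨⟨h1, by omega⟩, fun hxS => by have := hSmem x hxS; omega⟩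
        · exact ⟨⟨by omega, h2⟩, hxS⟩
    have hdisj : Disjoint (Finset.Icc 1 (k-1)) (Finset.Icc k (m-1) \ S) := by
      simp only [Finset.disjoint_left, Finset.mem_Icc, Finset.mem_sdiff]
      rintro x ⟨h1, h2⟩ ⟨⟨h3, h4⟩, -⟩
      omega
    have hfac : (∏ x ∈ Finset.Icc 1 (k-1), x) = Nat.factorial (k-1) := by
      have h : Finset.Icc 1 (k-1) = Finset.Ico 1 ((k-1)+1) := by rw [Finset.Ico_add_one_right_eq_Icc]
      rw [h, Finset.prod_Ico_id_eq_factorial]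
    rw [hun, Finset.prod_union hdisj, hfac]
  rw [Finset.sum_congr rfl hsplit, ← Finset.mul_sum]
  have hexp : ∑ S ∈ (Finset.Icc k (m-1)).powerset, ∏ c ∈ Finset.Icc k (m-1) \ S, c
      = ∏ c ∈ Finset.Icc k (m-1), (1 + c) := by
    rw [Finset.prod_add]
    apply Finset.sum_congr rfl
    intro S hS
    simp
  rw [hexp, ← mul_assoc, Nat.mul_factorial_pred (by omega), aux_fact k hk m hkm]



/-- The STV-signature (for parameter `k`) of a ranking: record each
left-to-right minimum, stopping as soon as a recorded element is `< k`. -/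
def stvSig (k : ℕ) : List ℕ → List ℕ
  | [] => []
  | a :: t => if a < k then [a] else a :: stvSig k (t.filter (· < a))
termination_by l => l.length
decreasing_by first | simpa using Nat.lt_succ_of_le ((List.length_filter_le _ t.attach).trans_eq List.length_attach) | (simp only [List.length_cons]; exact Nat.lt_succ_of_le ((List.length_filter_le _ _).trans_eq List.length_attach)) | (simp_wf; grind [List.length_filter_le, List.length_attach])

/-- The finite set of all STV-signatures over `{0, …, m-1}` for parameter
`k`: strictly decreasing lists whose elements other than the last lie in
`{k, …, m-1}` and whose last element lies in `{0, …, k-1}`. -/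
noncomputable def stvSigs (m k : ℕ) : Finset (List ℕ) :=
  ((Finset.Icc k (m - 1)).powerset ×ˢ Finset.range k).image
    (fun p => p.1.sort (· ≥ ·) ++ [p.2])

/-- `R̃(s)`: the number of permutations of `{0, …, m-1}` with STV-signature
`s`, given by the product of all `c ∈ {1, …, m-1}` not among the elements of
`s` other than its last. -/
def Rtilde (m : ℕ) (s : List ℕ) : ℕ :=
  ∏ c ∈ (Finset.Icc 1 (m - 1)).filter (fun c => c ∉ s.dropLast), c

lemma Rtilde_eq (m : ℕ) (S : Finset ℕ) (j : ℕ) :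
    Rtilde m (S.sort (· ≥ ·) ++ [j]) = ∏ c ∈ Finset.Icc 1 (m-1) \ S, c := by
  unfold Rtilde
  rw [List.dropLast_concat]
  congr 1
  rw [Finset.sdiff_eq_filter]
  apply Finset.filter_congr
  intro x _
  simp [Finset.mem_sort]

lemma g_inj (m k : ℕ) :
    ∀ p ∈ (Finset.Icc k (m-1)).powerset ×ˢ Finset.range k,
    ∀ q ∈ (Finset.Icc k (m-1)).powerset ×ˢ Finset.range k,
      (fun p : Finset ℕ × ℕ => p.1.sort (· ≥ ·) ++ [p.2]) p
        = (fun p : Finset ℕ × ℕ => p.1.sort (· ≥ ·) ++ [p.2]) q → p = q := by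
  intro p _ q _ h
  simp only at h
  obtain ⟨h1, h2⟩ := List.append_inj' h rfl
  have hS : p.1 = q.1 := by
    rw [← Finset.sort_toFinset (r := (· ≥ ·)) (s := p.1), h1, Finset.sort_toFinset]
  have hj : p.2 = q.2 := by simpa using h2
  exact Prod.ext hS hj


/-- STV fooling set cardinality: for `n = ℓ·m!` and `1 ≤ k ≤ m`, given any
choice `rep` of representatives (a permutation with the prescribed
STV-signature, for each STV-signature), the number of profiles containing,
for each STV-signature `s`, exactly `ℓ·R̃(s)` copies of `rep s`, equals `n!`
divided by `(∏_{S ⊆ {k,…,m-1}} (ℓ ∏_{c ∈ {1,…,m-1}∖S} c)!)^k`. -/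
theorem stmt18 (m k ℓ n : ℕ) (hk : 1 ≤ k) (hkm : k ≤ m) (hℓ : 0 < ℓ)
    (hn : n = ℓ * Nat.factorial m)
    (rep : List ℕ → List ℕ)
    (hrep : ∀ s ∈ stvSigs m k,
      (rep s).Perm (List.range m) ∧ stvSig k (rep s) = s) :
    {P : Fin n → List ℕ | ∀ s ∈ stvSigs m k,
        (Finset.univ.filter (fun v => P v = rep s)).card = ℓ * Rtilde m s}.ncard
      = Nat.factorial n /
          (∏ S ∈ (Finset.Icc k (m - 1)).powerset,
            Nat.factorial (ℓ * ∏ c ∈ Finset.Icc 1 (m - 1) \ S, c)) ^ k := by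
  classical
  have hrepinj : Set.InjOn rep (stvSigs m k) := by
    intro s hs s' hs' h
    rw [← (hrep s (Finset.mem_coe.mp hs)).2, ← (hrep s' (Finset.mem_coe.mp hs')).2, h]
  have hsum : ∑ s ∈ stvSigs m k, ℓ * Rtilde m s = n := by
    rw [stvSigs, Finset.sum_image (g_inj m k), Finset.sum_product]
    have h1 : ∀ S ∈ (Finset.Icc k (m-1)).powerset,
        (∑ j ∈ Finset.range k, ℓ * Rtilde m (S.sort (· ≥ ·) ++ [j]))
          = k * (ℓ * ∏ c ∈ Finset.Icc 1 (m-1) \ S, c) := by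
      intro S _
      rw [Finset.sum_congr rfl (fun j _ => by rw [Rtilde_eq])]
      rw [Finset.sum_const, Finset.card_range, smul_eq_mul]
    rw [Finset.sum_congr rfl h1]
    have h2 : ∑ S ∈ (Finset.Icc k (m-1)).powerset,
        k * (ℓ * ∏ c ∈ Finset.Icc 1 (m-1) \ S, c)
          = ℓ * (k * ∑ S ∈ (Finset.Icc k (m-1)).powerset,
              ∏ c ∈ Finset.Icc 1 (m-1) \ S, c) := by
      rw [Finset.mul_sum, Finset.mul_sum]
      apply Finset.sum_congr rfl
      intros; ring
    rw [h2, key_sum m k hk hkm, hn]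
  have hprod : ∏ s ∈ stvSigs m k, Nat.factorial (ℓ * Rtilde m s)
      = (∏ S ∈ (Finset.Icc k (m - 1)).powerset,
          Nat.factorial (ℓ * ∏ c ∈ Finset.Icc 1 (m - 1) \ S, c)) ^ k := by
    rw [stvSigs, Finset.prod_image (g_inj m k), Finset.prod_product]
    have h1 : ∀ S ∈ (Finset.Icc k (m-1)).powerset,
        (∏ j ∈ Finset.range k, Nat.factorial (ℓ * Rtilde m (S.sort (· ≥ ·) ++ [j])))
          = Nat.factorial (ℓ * ∏ c ∈ Finset.Icc 1 (m-1) \ S, c) ^ k := by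
      intro S _
      rw [Finset.prod_congr rfl (fun j _ => by rw [Rtilde_eq])]
      rw [Finset.prod_const, Finset.card_range]
    rw [Finset.prod_congr rfl h1, Finset.prod_pow]
  have hmain := count_multinomial (fun s => ℓ * Rtilde m s) rep (stvSigs m k)
    (Fin n) hrepinj (by rw [Fintype.card_fin]; exact hsum.symm)
  have hncard : {P : Fin n → List ℕ | ∀ s ∈ stvSigs m k,
      (Finset.univ.filter (fun v => P v = rep s)).card = ℓ * Rtilde m s}.ncard
      = Nat.card {P : Fin n → List ℕ // ∀ s ∈ stvSigs m k,
      (Finset.univ.filter (fun v => P v = rep s)).card = ℓ * Rtilde m s} := rfl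
  rw [hncard, hmain, Nat.multinomial]
  rw [hsum, hprod]
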